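/- For all nonnegative integers m and n: \sum_{k=1}^{n} k^m F_k = n^m F_{n+2} + (-1)^{m+1} \sum_{j=0}^{m} A(m,j) F_{j+m+1} - \sum_{s=1}^{m} (-1)^{s+1} \binom{m}{s} n^{m-s} \sum_{j=1}^{s} A(s,j) F_{j+n+s+1}. -/

import Mathlib

/-- Fibonacci numbers over the integers, `F_{-n} = (-1)^{n-1} F_n`. -/
def fibZ (n : ℤ) : ℤ :=
  if 0 ≤ n then (Nat.fib n.toNat : ℤ)
  else (-1) ^ ((-n).toNat + 1) * (Nat.fib (-n).toNat : ℤ)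

/-- The Eulerian numbers `A(i,j) = ∑_{t=0}^{j} (-1)^t C(i+1,t) (j-t)^i`. -/
def eulerianA (i j : ℕ) : ℤ :=
  ∑ t ∈ Finset.range (j + 1), (-1 : ℤ) ^ t * (Nat.choose (i + 1) t) * ((j - t : ℕ) ^ i : ℤ)

/-!
The Eulerian polynomial `A_m(X) = ∑ⱼ A(m,j) Xʲ` is `(1 - X)^(m+1) ∑_{k ≥ 0} kᵐ Xᵏ` as a power
series, because `A(m, j)` is exactly the `j`-th coefficient of that product. Splitting the series
at `k = n` and expanding `(n + i)ᵐ` binomially gives the polynomial identity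
`A_m = (1 - X)^(m+1) ∑_{k<n} kᵐ Xᵏ + Xⁿ ∑ₛ C(m,s) n^(m-s) (1 - X)^(m-s) A_s`.
A root of `x² = x + 1` satisfies `x (1 - x) = -1`, so multiplying by `x^(m+1)` solves this for
`∑_{k<n} kᵐ xᵏ`. Finally the `ℤ`-linear map `Xᵏ ↦ F_k` vanishes on multiples of `X² - X - 1`, so an
identity between integer polynomials that holds at the root of `X² - X - 1` in `ℤ[X]/(X² - X - 1)`
stays true with `F_k` in place of `Xᵏ`.
-/

open Polynomial Finset

-- For `j > m`, `±A(m, j)` is the `(m+1)`-st forward difference of `t ↦ tᵐ` at `j - m - 1`.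
theorem eulerianA_eq_zero_of_lt {m j : ℕ} (h : m < j) : eulerianA m j = 0 := by
  have hΔ := congrFun (fwdDiff_iter_pow_eq_zero_of_lt (R := ℤ) (Nat.lt_succ_self m))
    ((j : ℤ) - (m + 1))
  rw [fwdDiff_iter_eq_sum_shift, ← sum_range_reflect, Pi.zero_apply] at hΔ
  rw [eulerianA, ← sum_subset (range_subset_range.2 (by omega : m + 2 ≤ j + 1)), ← hΔ]
  · refine sum_congr rfl fun t ht => ?_
    have ht : t ≤ m + 1 := Nat.lt_succ_iff.mp (mem_range.mp ht)
    rw [show m.succ + 1 - 1 - t = m + 1 - t by omega, Nat.succ_eq_add_one,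
      Nat.sub_sub_self ht, Nat.choose_symm ht, nsmul_one, Nat.cast_sub ht,
      Nat.cast_sub (by omega : t ≤ j), smul_eq_mul]
    push_cast
    ring
  · intro t _ ht
    rw [mem_range, not_lt] at ht
    simp [Nat.choose_eq_zero_of_lt (by omega : m + 1 < t)]

theorem eulerianA_zero_right {m : ℕ} (hm : m ≠ 0) : eulerianA m 0 = 0 := by
  simp [eulerianA, hm]

theorem coeff_one_sub_X_pow {R : Type*} [CommRing R] (n k : ℕ) :
    ((1 - X : R[X]) ^ n).coeff k = (-1) ^ k * n.choose k := by
  induction n generalizing k with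
  | zero => cases k <;> simp [coeff_one]
  | succ n ih =>
    rw [pow_succ, mul_sub, mul_one, coeff_sub, ih]
    cases k with
    | zero => simp
    | succ k => rw [coeff_mul_X, ih, Nat.choose_succ_succ']; push_cast; ring

noncomputable def eulerianPoly (m : ℕ) : ℤ[X] :=
  ∑ j ∈ range (m + 1), C (eulerianA m j) * X ^ j

theorem coeff_eulerianPoly (m j : ℕ) : (eulerianPoly m).coeff j = eulerianA m j := by
  simp only [eulerianPoly, finsetSum_coeff, coeff_C_mul_X_pow, sum_ite_eq, mem_range]
  split_ifs with h
  · rfl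
  · exact (eulerianA_eq_zero_of_lt (by omega)).symm

theorem coe_eulerianPoly (m : ℕ) :
    (eulerianPoly m : PowerSeries ℤ) =
      (1 - PowerSeries.X) ^ (m + 1) * PowerSeries.mk fun k => (k : ℤ) ^ m := by
  ext j
  rw [← Polynomial.coe_X, ← Polynomial.coe_one, ← Polynomial.coe_sub, ← Polynomial.coe_pow,
    PowerSeries.coeff_mul, Polynomial.coeff_coe, coeff_eulerianPoly, eulerianA,
    Nat.sum_antidiagonal_eq_sum_range_succ_mk]
  simp only [Polynomial.coeff_coe, coeff_one_sub_X_pow, PowerSeries.coeff_mk]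

theorem mk_pow_eq_add_X_pow_mul (m n : ℕ) :
    (PowerSeries.mk fun k => (k : ℤ) ^ m) =
      ∑ k ∈ range n, PowerSeries.C ((k : ℤ) ^ m) * PowerSeries.X ^ k +
        PowerSeries.X ^ n * ∑ s ∈ range (m + 1),
          PowerSeries.C ((m.choose s : ℤ) * n ^ (m - s)) * PowerSeries.mk fun k => (k : ℤ) ^ s := by
  ext j
  simp only [map_add, PowerSeries.coeff_mk, map_sum, sum_ite_eq, mem_range,
    PowerSeries.coeff_X_pow_mul', PowerSeries.coeff_C_mul, PowerSeries.coeff_X_pow, mul_ite,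
    mul_one, mul_zero]
  rcases lt_or_ge j n with hjn | hnj
  · simp [hjn, not_le.mpr hjn]
  · rw [if_neg (not_lt.mpr hnj), if_pos hnj, zero_add, ← Nat.sub_add_cancel hnj, Nat.cast_add,
      add_pow, Nat.add_sub_cancel]
    exact sum_congr rfl fun s _ => by ring

theorem eulerianPoly_eq_add_X_pow_mul (m n : ℕ) :
    eulerianPoly m = (1 - X) ^ (m + 1) * ∑ k ∈ range n, C ((k : ℤ) ^ m) * X ^ k +
      X ^ n * ∑ s ∈ range (m + 1),
        C ((m.choose s : ℤ) * n ^ (m - s)) * ((1 - X) ^ (m - s) * eulerianPoly s) := by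
  apply Polynomial.coe_injective
  simp only [← coeToPowerSeries.ringHom_apply, map_add, map_mul, map_sum]
  simp only [coeToPowerSeries.ringHom_apply, coe_eulerianPoly, Polynomial.coe_pow,
    Polynomial.coe_sub, Polynomial.coe_one, coe_C, coe_X]
  rw [mk_pow_eq_add_X_pow_mul m n, mul_add, mul_left_comm, mul_sum (range (m + 1))]
  congr 2
  refine sum_congr rfl fun s hs => ?_
  rw [show m + 1 = m - s + (s + 1) by have := mem_range.mp hs; omega, pow_add, map_mul]
  ring

section CommRing

variable {R : Type*} [CommRing R]

theorem aeval_eulerianPoly (x : R) (m : ℕ) :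
    aeval x (eulerianPoly m) = ∑ j ∈ range (m + 1), (eulerianA m j : R) * x ^ j := by
  simp [eulerianPoly]

theorem sum_mul_pow_add (x : R) (f : ℕ → R) (s : Finset ℕ) (k : ℕ) :
    ∑ j ∈ s, f j * x ^ (j + k) = x ^ k * ∑ j ∈ s, f j * x ^ j := by
  rw [mul_sum]
  exact sum_congr rfl fun _ _ => by ring

theorem neg_one_pow_mul_pow_mul_one_sub_pow {x : R} (hx : x ^ 2 = x + 1) (a : ℕ) :
    (-1) ^ a * x ^ a * (1 - x) ^ a = 1 := by
  rw [← mul_pow, ← mul_pow, show -1 * x * (1 - x) = 1 by linear_combination hx, one_pow]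

theorem sum_range_pow_mul_pow_of_sq_eq {x : R} (hx : x ^ 2 = x + 1) (m n : ℕ) :
    ∑ k ∈ range n, (k : R) ^ m * x ^ k =
      (-1) ^ (m + 1) * ∑ j ∈ range (m + 1), (eulerianA m j : R) * x ^ (j + m + 1) -
        ∑ s ∈ range (m + 1), (-1) ^ (s + 1) * (m.choose s : R) * n ^ (m - s) *
          ∑ j ∈ range (s + 1), (eulerianA s j : R) * x ^ (j + n + s + 1) := by
  have key := congrArg (aeval x) (eulerianPoly_eq_add_X_pow_mul m n)
  simp only [map_add, map_mul, map_sum, map_pow, map_sub, map_one, aeval_X, map_natCast,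
    aeval_eulerianPoly] at key
  have hsign : ∀ s ∈ range (m + 1), (-1) ^ (s + 1) * (m.choose s : R) * n ^ (m - s) *
      (x ^ (n + (s + 1)) * ∑ j ∈ range (s + 1), (eulerianA s j : R) * x ^ j) =
      (-1) ^ (m + 1) * x ^ (m + 1) * (x ^ n * ((m.choose s : R) * n ^ (m - s) *
        ((1 - x) ^ (m - s) * ∑ j ∈ range (s + 1), (eulerianA s j : R) * x ^ j))) := by
    intro s hs
    rw [show m + 1 = (m - s) + (s + 1) by have := mem_range.mp hs; omega]
    linear_combination (-(-1) ^ (s + 1) * (m.choose s : R) * n ^ (m - s) *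
      (x ^ (n + (s + 1)) * ∑ j ∈ range (s + 1), (eulerianA s j : R) * x ^ j)) *
        neg_one_pow_mul_pow_mul_one_sub_pow hx (m - s)
  simp only [add_assoc, sum_mul_pow_add]
  rw [sum_congr rfl hsign, ← mul_sum, ← mul_sum]
  linear_combination -(-1) ^ (m + 1) * x ^ (m + 1) * key -
    (∑ k ∈ range n, (k : R) ^ m * x ^ k) * neg_one_pow_mul_pow_mul_one_sub_pow hx (m + 1)

end CommRing

noncomputable def fibEval : ℤ[X] →ₗ[ℤ] ℤ :=
  lsum fun k => (Nat.fib k : ℤ) • LinearMap.id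

theorem fibEval_X_pow (k : ℕ) : fibEval (X ^ k) = Nat.fib k := by
  rw [← monomial_one_right_eq_X_pow, fibEval, lsum_apply, sum_monomial_index] <;> simp

theorem fibEval_C_mul (a : ℤ) (p : ℤ[X]) : fibEval (C a * p) = a * fibEval p := by
  rw [C_mul', map_smul, smul_eq_mul]

theorem fibEval_mul_eq_zero (p : ℤ[X]) : fibEval ((X ^ 2 - X - 1) * p) = 0 := by
  induction p using Polynomial.induction_on' with
  | add p q hp hq => rw [mul_add, map_add, hp, hq, add_zero]
  | monomial k a =>
    rw [← C_mul_X_pow_eq_monomial, show (X ^ 2 - X - 1) * (C a * X ^ k) =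
      C a * X ^ (k + 2) - C a * X ^ (k + 1) - C a * X ^ k by ring]
    simp only [map_sub, fibEval_C_mul, fibEval_X_pow, Nat.fib_add_two]
    push_cast
    ring

theorem fibEval_eq_of_forall_aeval_eq {p q : ℤ[X]}
    (h : ∀ (R : Type) [CommRing R] (x : R), x ^ 2 = x + 1 → aeval x p = aeval x q) :
    fibEval p = fibEval q := by
  set f : ℤ[X] := X ^ 2 - X - 1
  have hroot : AdjoinRoot.root f ^ 2 = AdjoinRoot.root f + 1 := by
    have := AdjoinRoot.mk_self (f := f)
    simp only [f, map_sub, map_pow, AdjoinRoot.mk_X, map_one] at this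
    linear_combination this
  have hpq : AdjoinRoot.mk f p = AdjoinRoot.mk f q := by
    rw [← AdjoinRoot.aeval_eq, ← AdjoinRoot.aeval_eq]
    exact h _ _ hroot
  obtain ⟨r, hr⟩ := AdjoinRoot.mk_eq_mk.mp hpq
  rw [← sub_eq_zero, ← map_sub, hr, fibEval_mul_eq_zero]

theorem sum_range_pow_mul_fib (m n : ℕ) :
    ∑ k ∈ range n, (k : ℤ) ^ m * Nat.fib k =
      (-1) ^ (m + 1) * ∑ j ∈ range (m + 1), eulerianA m j * Nat.fib (j + m + 1) -
        ∑ s ∈ range (m + 1), (-1) ^ (s + 1) * (m.choose s : ℤ) * n ^ (m - s) *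
          ∑ j ∈ range (s + 1), eulerianA s j * Nat.fib (j + n + s + 1) := by
  have := fibEval_eq_of_forall_aeval_eq (p := ∑ k ∈ range n, C ((k : ℤ) ^ m) * X ^ k)
    (q := C ((-1) ^ (m + 1)) * ∑ j ∈ range (m + 1), C (eulerianA m j) * X ^ (j + m + 1) -
      ∑ s ∈ range (m + 1), C ((-1) ^ (s + 1) * (m.choose s : ℤ) * n ^ (m - s)) *
        ∑ j ∈ range (s + 1), C (eulerianA s j) * X ^ (j + n + s + 1))
    fun R _ x hx => by simpa using sum_range_pow_mul_pow_of_sq_eq hx m n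
  simp only [map_sub, map_sum, fibEval_C_mul, fibEval_X_pow] at this
  exact this

theorem sum_range_succ_eq_add_sum_Icc {M : Type*} [AddCommMonoid M] (f : ℕ → M) (n : ℕ) :
    ∑ k ∈ range (n + 1), f k = f 0 + ∑ k ∈ Icc 1 n, f k := by
  rw [Nat.range_succ_eq_Icc_zero, ← add_sum_Ioc_eq_sum_Icc (Nat.zero_le n),
    ← Icc_add_one_left_eq_Ioc, zero_add]

theorem fibZ_natCast (n : ℕ) : fibZ n = Nat.fib n := by
  simp [fibZ]

theorem fibZ_natCast_add_two (n : ℕ) : fibZ (n + 2) = fibZ n + fibZ (n + 1) := by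
  simpa [← fibZ_natCast] using congrArg (Nat.cast (R := ℤ)) (Nat.fib_add_two (n := n))

theorem fib_sum_polynomial_form (m n : ℕ) :
    (∑ k ∈ Finset.Icc 1 n, (k : ℤ) ^ m * fibZ k) =
      (n : ℤ) ^ m * fibZ (n + 2)
        + (-1) ^ (m + 1) * ∑ j ∈ Finset.range (m + 1), eulerianA m j * fibZ (j + m + 1)
        - ∑ s ∈ Finset.Icc 1 m, (-1 : ℤ) ^ (s + 1) * (m.choose s : ℤ) * (n : ℤ) ^ (m - s) *
            ∑ j ∈ Finset.Icc 1 s, eulerianA s j * fibZ (j + n + s + 1) := by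
  -- `F_0 = 0` and `A(s, 0) = 0` for `s ≥ 1` let the sums start at `1`; the `s = 0` term
  -- `nᵐ F_{n+1}` combines with the summand `nᵐ F_n` for `k = n` into `nᵐ F_{n+2}`.
  have h := sum_range_pow_mul_fib m n
  simp only [← fibZ_natCast] at h
  push_cast at h
  have hlhs : ∑ k ∈ Icc 1 n, (k : ℤ) ^ m * fibZ k =
      ∑ k ∈ range n, (k : ℤ) ^ m * fibZ k + n ^ m * fibZ n := by
    rw [← sum_range_succ, sum_range_succ_eq_add_sum_Icc]
    simp [fibZ]
  have hinner : ∀ s ∈ Icc 1 m, ∑ j ∈ range (s + 1), eulerianA s j * fibZ (j + n + s + 1) =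
      ∑ j ∈ Icc 1 s, eulerianA s j * fibZ (j + n + s + 1) := fun s hs => by
    rw [sum_range_succ_eq_add_sum_Icc,
      eulerianA_zero_right (Nat.one_le_iff_ne_zero.mp (mem_Icc.mp hs).1), zero_mul, zero_add]
  rw [sum_range_succ_eq_add_sum_Icc (fun s => (-1 : ℤ) ^ (s + 1) * (m.choose s : ℤ) *
      n ^ (m - s) * ∑ j ∈ range (s + 1), eulerianA s j * fibZ (j + n + s + 1)),
    sum_congr (s₁ := Icc 1 m) rfl fun s hs => by rw [hinner s hs]] at h
  rw [hlhs, h, fibZ_natCast_add_two]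
  simp only [zero_add, pow_one, Nat.choose_zero_right, Nat.cast_zero, Nat.cast_one, tsub_zero,
    sum_range_one, add_zero, show eulerianA 0 0 = 1 from rfl]
  ring
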